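/- arXiv:2502.12337 — 4 statements merged into one kernel-verified Lean document; each statement's English description precedes it below -/
import Mathlib

section
/- Let 𝒜 ∈ ℝ^{N×N} be strictly diagonally dominant with positive diagonal entries, let A_i ∈ ℝ^{N×N}, 𝒟 ⊂ {1,…,N}, 𝒟_k ⊂ {1,…,N}\{k} for k ∈ 𝒟, 𝒦_i = {k ∈ 𝒟 : i ∈ 𝒟_k}, and define Ā(δ) row-wise by [Ā(δ)]_{i:} = [𝒜]_{i:} + Σ_{k∈𝒦_i} δ_k [A_i]_{k:}. Fix i with 𝒦_i ≠ ∅ and suppose |δ| < ([𝒜]_ii - Σ_{j≠i} |[𝒜]_ij|) / (Σ_{k∈𝒦_i} Σ_{j=1}^N |[A_i]_{kj}|). Then the i-th row of Ā(δ) is strictly diagonally dominant: [Ā(δ)]_ii > Σ_{j≠i} |[Ā(δ)]_ij|. -/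
open Matrix Finset

/-- If `𝒜` is strictly diagonally dominant with positive diagonal entries and
`Ā(δ) i j = 𝒜 i j + ∑ k ∈ 𝒦 i, δ k * (A i) k j`, then for any row `i` with `𝒦 i ≠ ∅`
and `|δ| < (𝒜 i i - ∑_{j≠i} |𝒜 i j|) / (∑ k ∈ 𝒦 i, ∑ j, |A i k j|)` (stated
multiplicatively to cover the `p/0 = ∞` convention), the `i`-th row of `Ā(δ)` is
strictly diagonally dominant: `Ā(δ) i i > ∑_{j≠i} |Ā(δ) i j|`. -/
theorem stmt3 (N : ℕ) (𝒜 : Matrix (Fin N) (Fin N) ℝ)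
    (hdd : ∀ i, ∑ j ∈ Finset.univ.erase i, |𝒜 i j| < 𝒜 i i)
    (hpos : ∀ i, 0 < 𝒜 i i)
    (A : Fin N → Matrix (Fin N) (Fin N) ℝ)
    (𝒟 : Finset (Fin N)) (Dset : Fin N → Finset (Fin N))
    (hD : ∀ k ∈ 𝒟, k ∉ Dset k)
    (𝒦 : Fin N → Finset (Fin N)) (h𝒦 : ∀ i, 𝒦 i = 𝒟.filter fun k => i ∈ Dset k)
    (δ : Fin N → ℝ)
    (Abar : Matrix (Fin N) (Fin N) ℝ)
    (hAbar : ∀ i j, Abar i j = 𝒜 i j + ∑ k ∈ 𝒦 i, δ k * A i k j)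
    (i : Fin N) (hKi : (𝒦 i).Nonempty)
    (hδ : Real.sqrt (∑ k ∈ 𝒟, δ k ^ 2) * (∑ k ∈ 𝒦 i, ∑ j, |A i k j|) <
      𝒜 i i - ∑ j ∈ Finset.univ.erase i, |𝒜 i j|) :
    ∑ j ∈ Finset.univ.erase i, |Abar i j| < Abar i i := by
  set S := Real.sqrt (∑ k ∈ 𝒟, δ k ^ 2) with hSdef
  have hS0 : 0 ≤ S := Real.sqrt_nonneg _
  have hsub : 𝒦 i ⊆ 𝒟 := by rw [h𝒦 i]; exact Finset.filter_subset _ _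
  have hSk : ∀ k ∈ 𝒦 i, |δ k| ≤ S := by
    intro k hk
    rw [← Real.sqrt_sq_eq_abs]
    exact Real.sqrt_le_sqrt (Finset.single_le_sum (fun j _ => sq_nonneg (δ j)) (hsub hk))
  -- bound off-diagonal sum
  have le_bound : ∀ j : Fin N, |𝒜 i j + ∑ k ∈ 𝒦 i, δ k * A i k j| ≤
      |𝒜 i j| + S * ∑ k ∈ 𝒦 i, |A i k j| := by
    intro j
    calc |𝒜 i j + ∑ k ∈ 𝒦 i, δ k * A i k j|
        ≤ |𝒜 i j| + |∑ k ∈ 𝒦 i, δ k * A i k j| := abs_add_le _ _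
      _ ≤ |𝒜 i j| + ∑ k ∈ 𝒦 i, |δ k * A i k j| := by
          gcongr; exact Finset.abs_sum_le_sum_abs _ _
      _ ≤ |𝒜 i j| + ∑ k ∈ 𝒦 i, S * |A i k j| := by
          gcongr with k hk
          rw [abs_mul]
          exact mul_le_mul_of_nonneg_right (hSk k hk) (abs_nonneg _)
      _ = |𝒜 i j| + S * ∑ k ∈ 𝒦 i, |A i k j| := by rw [Finset.mul_sum]
  have h1 : ∑ j ∈ Finset.univ.erase i, |Abar i j| ≤
      (∑ j ∈ Finset.univ.erase i, |𝒜 i j|) +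
        S * ∑ k ∈ 𝒦 i, ∑ j ∈ Finset.univ.erase i, |A i k j| := by
    calc ∑ j ∈ Finset.univ.erase i, |Abar i j|
        ≤ ∑ j ∈ Finset.univ.erase i, (|𝒜 i j| + S * ∑ k ∈ 𝒦 i, |A i k j|) := by
          apply Finset.sum_le_sum
          intro j hj
          rw [hAbar]
          exact le_bound j
      _ = _ := by
          rw [Finset.sum_add_distrib]
          congr 1
          simp_rw [Finset.mul_sum]
          exact Finset.sum_comm
  -- bound diagonal
  have h2 : 𝒜 i i - S * ∑ k ∈ 𝒦 i, |A i k i| ≤ Abar i i := by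
    rw [hAbar]
    have : -(S * ∑ k ∈ 𝒦 i, |A i k i|) ≤ ∑ k ∈ 𝒦 i, δ k * A i k i := by
      rw [Finset.mul_sum, ← Finset.sum_neg_distrib]
      apply Finset.sum_le_sum
      intro k hk
      have h3 : |δ k * A i k i| ≤ S * |A i k i| := by
        rw [abs_mul]
        exact mul_le_mul_of_nonneg_right (hSk k hk) (abs_nonneg _)
      have := neg_abs_le (δ k * A i k i)
      linarith
    linarith
  -- combine
  have hsplit : ∑ k ∈ 𝒦 i, ∑ j ∈ Finset.univ.erase i, |A i k j| +
      ∑ k ∈ 𝒦 i, |A i k i| = ∑ k ∈ 𝒦 i, ∑ j, |A i k j| := by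
    rw [← Finset.sum_add_distrib]
    apply Finset.sum_congr rfl
    intro k _
    rw [Finset.sum_erase_add _ _ (Finset.mem_univ i)]
  have hST : S * (∑ k ∈ 𝒦 i, ∑ j ∈ Finset.univ.erase i, |A i k j|) +
      S * (∑ k ∈ 𝒦 i, |A i k i|) = S * ∑ k ∈ 𝒦 i, ∑ j, |A i k j| := by
    rw [← mul_add, hsplit]
  linarith
end

section
/- (Lemma 1) Let 𝒜 ∈ ℝ^{N×N} be strictly diagonally dominant with positive diagonal entries, let A_i ∈ ℝ^{N×N} for i = 1,…,N, let 𝒟 ⊂ {1,…,N}, 𝒟_k ⊂ {1,…,N}\{k} for k ∈ 𝒟, 𝒦_i = {k ∈ 𝒟 : i ∈ 𝒟_k}, 𝒱 = {i : 𝒦_i ≠ ∅}, and define Ā(δ) row-wise by [Ā(δ)]_{i:} = [𝒜]_{i:} + Σ_{k∈𝒦_i} δ_k [A_i]_{k:}. Let r = min over i ∈ 𝒱 of min( ([𝒜]_ii - Σ_{j≠i}|[𝒜]_ij|) / (Σ_{k∈𝒦_i} Σ_{j=1}^N |[A_i]_{kj}|), [𝒜]_ii / (Σ_{k∈𝒦_i}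 |[A_i]_{ki}|) ), interpreting p/q as +∞ if p > 0 and q = 0. Then for every δ ∈ ℝ^𝒟 with Euclidean norm |δ| < r, the matrix Ā(δ) is strictly diagonally dominant with positive diagonal entries, and consequently for every vector k ∈ ℝ^N with k_i > 0 for all i, the matrix -diag(k)·Ā(δ) is Hurwitz. -/
/-!
A matrix whose off-diagonal row sums of absolute values are strictly below its diagonal entries
has, by Gershgorin's theorem, all its eigenvalues in the open right half-plane, and this property
survives left multiplication by a positive diagonal matrix. Each deceptive gain satisfies
`|δ k| ≤ ‖δ‖ < r`, so the perturbation added to row `i` of `𝒜` has absolute row sum at most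
`‖δ‖ · ∑ k ∈ 𝒦 i, ∑ j, |A i k j|`, which the choice of `r` keeps strictly below the
dominance gap `𝒜 i i - ∑ j ≠ i, |𝒜 i j|`.
-/

open Matrix Finset

namespace Matrix

variable {n : Type*} [Fintype n] [DecidableEq n]

def IsStrictlyDiagDominant (M : Matrix n n ℝ) : Prop :=
  ∀ i, ∑ j ∈ univ.erase i, |M i j| < M i i

namespace IsStrictlyDiagDominant

variable {M : Matrix n n ℝ}

theorem diag_pos (hM : M.IsStrictlyDiagDominant) (i : n) : 0 < M i i :=
  (sum_nonneg fun j _ => abs_nonneg (M i j)).trans_lt (hM i)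

theorem diagonal_mul (hM : M.IsStrictlyDiagDominant) {d : n → ℝ} (hd : ∀ i, 0 < d i) :
    (diagonal d * M).IsStrictlyDiagDominant := by
  intro i
  simp only [Matrix.diagonal_mul, abs_mul, abs_of_pos (hd i), ← mul_sum]
  exact mul_lt_mul_of_pos_left (hM i) (hd i)

theorem re_lt_zero_of_mem_spectrum_neg (hM : M.IsStrictlyDiagDominant) {μ : ℂ}
    (hμ : μ ∈ spectrum ℂ ((-M).map (Complex.ofReal : ℝ → ℂ))) : μ.re < 0 := by
  have heig : Module.End.HasEigenvalue (toLin' ((-M).map (Complex.ofReal : ℝ → ℂ))) μ :=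
    Module.End.hasEigenvalue_iff_mem_spectrum.mpr (by rwa [spectrum_toLin'])
  obtain ⟨i, hi⟩ := eigenvalue_mem_ball heig
  rw [mem_closedBall_iff_norm] at hi
  have hre : μ.re + M i i ≤ ‖μ - -(M i i : ℂ)‖ := by
    simpa using (le_abs_self _).trans (Complex.abs_re_le_norm (μ - -(M i i : ℂ)))
  simp only [map_apply, neg_apply, Complex.ofReal_neg, norm_neg, Complex.norm_real,
    Real.norm_eq_abs] at hi
  linarith [hM i]

end IsStrictlyDiagDominant

theorem isStrictlyDiagDominant_add {M E : Matrix n n ℝ}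
    (hE : ∀ i, ∑ j, |E i j| < M i i - ∑ j ∈ univ.erase i, |M i j|) :
    (M + E).IsStrictlyDiagDominant := by
  intro i
  have hoff : ∑ j ∈ univ.erase i, |(M + E) i j| ≤
      ∑ j ∈ univ.erase i, |M i j| + ∑ j ∈ univ.erase i, |E i j| := by
    rw [← sum_add_distrib]
    exact sum_le_sum fun j _ => abs_add_le _ _
  have hdiag : M i i - |E i i| ≤ (M + E) i i := by
    simp only [add_apply]
    linarith [neg_abs_le (E i i)]
  have hsplit := add_sum_erase univ (fun j => |E i j|) (mem_univ i)
  linarith [hE i]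

end Matrix

theorem abs_le_sqrt_sum_sq {ι : Type*} {s : Finset ι} {x : ι → ℝ} {k : ι} (hk : k ∈ s) :
    |x k| ≤ √(∑ l ∈ s, x l ^ 2) := by
  rw [← Real.sqrt_sq_eq_abs]
  exact Real.sqrt_le_sqrt (single_le_sum (fun l _ => sq_nonneg (x l)) hk)

theorem sum_abs_sum_mul_le {ι κ : Type*} [Fintype κ] {s : Finset ι} {δ : ι → ℝ} {c : ℝ}
    (hδ : ∀ k ∈ s, |δ k| ≤ c) (a : ι → κ → ℝ) :
    ∑ j, |∑ k ∈ s, δ k * a k j| ≤ c * ∑ k ∈ s, ∑ j, |a k j| := by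
  calc ∑ j, |∑ k ∈ s, δ k * a k j|
      ≤ ∑ j, ∑ k ∈ s, c * |a k j| := sum_le_sum fun j _ =>
        (abs_sum_le_sum_abs _ _).trans <| sum_le_sum fun k hk => by
          rw [abs_mul]; exact mul_le_mul_of_nonneg_right (hδ k hk) (abs_nonneg _)
    _ = c * ∑ k ∈ s, ∑ j, |a k j| := by rw [sum_comm, mul_sum]; simp only [mul_sum]

theorem stmt4_general (N : ℕ) (𝒜 : Matrix (Fin N) (Fin N) ℝ)
    (hdd : ∀ i, ∑ j ∈ Finset.univ.erase i, |𝒜 i j| < 𝒜 i i)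
    (A : Fin N → Matrix (Fin N) (Fin N) ℝ)
    (𝒟 : Finset (Fin N)) (Dset : Fin N → Finset (Fin N))
    (𝒦 : Fin N → Finset (Fin N)) (h𝒦 : ∀ i, 𝒦 i = 𝒟.filter fun k => i ∈ Dset k)
    (Abar : (Fin N → ℝ) → Matrix (Fin N) (Fin N) ℝ)
    (hAbar : ∀ δ i j, Abar δ i j = 𝒜 i j + ∑ k ∈ 𝒦 i, δ k * A i k j)
    (r : ℝ)
    (hr1 : ∀ i, (𝒦 i).Nonempty →
      r * (∑ k ∈ 𝒦 i, ∑ j, |A i k j|) ≤ 𝒜 i i - ∑ j ∈ Finset.univ.erase i, |𝒜 i j|) :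
    ∀ δ : Fin N → ℝ, Real.sqrt (∑ k ∈ 𝒟, δ k ^ 2) < r →
      (∀ i, ∑ j ∈ Finset.univ.erase i, |Abar δ i j| < Abar δ i i) ∧
      (∀ i, 0 < Abar δ i i) ∧
      (∀ k : Fin N → ℝ, (∀ i, 0 < k i) →
        ∀ μ ∈ spectrum ℂ
          ((-(Matrix.diagonal k * Abar δ)).map (Complex.ofReal : ℝ → ℂ)),
          μ.re < 0) := by
  intro δ hδ
  have hgain : ∀ i, ∀ k ∈ 𝒦 i, |δ k| ≤ √(∑ l ∈ 𝒟, δ l ^ 2) := fun i k hk =>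
    abs_le_sqrt_sum_sq (by rw [h𝒦] at hk; exact (mem_filter.mp hk).1)
  have hpert : ∀ i, ∑ j, |∑ k ∈ 𝒦 i, δ k * A i k j| < 𝒜 i i - ∑ j ∈ univ.erase i, |𝒜 i j| := by
    intro i
    refine (sum_abs_sum_mul_le (hgain i) (A i)).trans_lt ?_
    rcases (sum_nonneg fun k _ => sum_nonneg fun j _ => abs_nonneg (A i k j) :
        0 ≤ ∑ k ∈ 𝒦 i, ∑ j, |A i k j|).eq_or_lt with hzero | hpos
    · rw [← hzero, mul_zero]
      linarith [hdd i]
    · exact (mul_lt_mul_of_pos_right hδ hpos).trans_le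
        (hr1 i (nonempty_of_sum_ne_zero hpos.ne'))
  have hSDD : (Abar δ).IsStrictlyDiagDominant := by
    have hAbar_eq : Abar δ = 𝒜 + Matrix.of fun i j => ∑ k ∈ 𝒦 i, δ k * A i k j := by
      ext i j; exact hAbar δ i j
    rw [hAbar_eq]
    exact isStrictlyDiagDominant_add hpert
  exact ⟨hSDD, hSDD.diag_pos, fun k hk _ hμ =>
    (hSDD.diagonal_mul hk).re_lt_zero_of_mem_spectrum_neg hμ⟩

/-- Lemma 1: Let `𝒜` be strictly diagonally dominant with positive diagonal,
and let `Ā(δ) i j = 𝒜 i j + ∑ k ∈ 𝒦 i, δ k * (A i) k j` be the perturbed pseudogradient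
matrix. Let `r > 0` be as in Lemma 1, i.e., for every "victim" `i` (`𝒦 i ≠ ∅`),
`r ≤ (𝒜 i i - ∑_{j≠i}|𝒜 i j|) / (∑ k ∈ 𝒦 i, ∑ j, |A i k j|)` and
`r ≤ 𝒜 i i / (∑ k ∈ 𝒦 i, |A i k i|)` (stated multiplicatively so that `p/0 = ∞`
imposes no constraint).  Then for every `δ` with Euclidean norm `|δ| < r`, the matrix
`Ā(δ)` is strictly diagonally dominant with positive diagonal entries, and consequently
for every `k` with positive entries, `-diag(k) * Ā(δ)` is Hurwitz. -/
theorem stmt4 (N : ℕ) (𝒜 : Matrix (Fin N) (Fin N) ℝ)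
    (hdd : ∀ i, ∑ j ∈ Finset.univ.erase i, |𝒜 i j| < 𝒜 i i)
    (hpos : ∀ i, 0 < 𝒜 i i)
    (A : Fin N → Matrix (Fin N) (Fin N) ℝ)
    (𝒟 : Finset (Fin N)) (Dset : Fin N → Finset (Fin N))
    (hD : ∀ k ∈ 𝒟, k ∉ Dset k)
    (𝒦 : Fin N → Finset (Fin N)) (h𝒦 : ∀ i, 𝒦 i = 𝒟.filter fun k => i ∈ Dset k)
    (Abar : (Fin N → ℝ) → Matrix (Fin N) (Fin N) ℝ)
    (hAbar : ∀ δ i j, Abar δ i j = 𝒜 i j + ∑ k ∈ 𝒦 i, δ k * A i k j)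
    (r : ℝ) (hr : 0 < r)
    (hr1 : ∀ i, (𝒦 i).Nonempty →
      r * (∑ k ∈ 𝒦 i, ∑ j, |A i k j|) ≤ 𝒜 i i - ∑ j ∈ Finset.univ.erase i, |𝒜 i j|)
    (hr2 : ∀ i, (𝒦 i).Nonempty → r * (∑ k ∈ 𝒦 i, |A i k i|) ≤ 𝒜 i i) :
    ∀ δ : Fin N → ℝ, Real.sqrt (∑ k ∈ 𝒟, δ k ^ 2) < r →
      (∀ i, ∑ j ∈ Finset.univ.erase i, |Abar δ i j| < Abar δ i i) ∧
      (∀ i, 0 < Abar δ i i) ∧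
      (∀ k : Fin N → ℝ, (∀ i, 0 < k i) →
        ∀ μ ∈ spectrum ℂ
          ((-(Matrix.diagonal k * Abar δ)).map (Complex.ofReal : ℝ → ℂ)),
          μ.re < 0) :=
  stmt4_general N 𝒜 hdd A 𝒟 Dset 𝒦 h𝒦 Abar hAbar r hr1
end

section
/- With the setup of the deceptive quadratic game: costs J_i(x) = ½ xᵀ A_i x + b_iᵀ x + c_i with A_i symmetric; pseudogradient data [𝒜]_{i:} = [A_i]_{i:}, [ℬ]_i = [b_i]_i; deceptive sets 𝒟, 𝒟_k, 𝒦_i = {k ∈ 𝒟 : i ∈ 𝒟_k}; perturbed data [Ā(δ)]_{i:} = [𝒜]_{i:} + Σ_{k∈𝒦_i} δ_k [A_i]_{k:} and [B̄(δ)]_i = [ℬ]_i + Σ_{k∈𝒦_i} δ_k [b_i]_k; Gaussian measures μ_i on ℝ with density (1/(√π q_i)) e^{-z²/q_i²}, product μ = μ_1 × ⋯ × μ_N; bounded measurable odd functions f_1,…,f_N; amplitudes a_1,…,a_N > 0; γ_i = ∫_ℝ f_i(s)² dμ_i(s); and η̄ : ℝ^N → ℝ^N given by [η̄(z)]_k =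 a_k f_k(z_k) + δ_k Σ_{j∈𝒟_k} a_j f_j(z_j) for k ∈ 𝒟 and [η̄(z)]_k = a_k f_k(z_k) otherwise. Then for every u ∈ ℝ^N and every i ∈ {1,…,N}, ∫_{ℝ^N} f_i(z_i) · J_i(u + η̄(z)) dμ(z) = a_i γ_i · [Ā(δ)u + B̄(δ)]_i. -/
/-!
Put `w(z) = (f_l(z_l))_l`. The perturbation is linear in `w`, `η̄ = (D · diag a) w` with `D` the
deception matrix, and for symmetric `A_i` the cost expands as
`J_i(u + p) = J_i(u) + (A_i u + b_i) ⬝ p + ½ pᵀ A_i p`. The product Gaussian measure is invariant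
under `z ↦ -z` and `w` is odd, so `w_i` times the even part `J_i(u) + ½ pᵀ A_i p` integrates to
zero. Only the linear term survives, and independence of the coordinates gives
`E[w_i w_l] = γ_i` for `l = i` and `0` otherwise; reading off the `i`-th column of `D` yields
the `i`-th row of `Ā(δ) u + B̄(δ)`.
-/

open MeasureTheory Matrix Finset

noncomputable def gmeas (q : ℝ) : Measure ℝ :=
  volume.withDensity fun z =>
    ENNReal.ofReal ((Real.sqrt Real.pi * q)⁻¹ * Real.exp (-z ^ 2 / q ^ 2))

open ProbabilityTheory

instance isNegInvariant_gaussianReal_zero (v : NNReal) : (gaussianReal 0 v).IsNegInvariant :=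
  ⟨by rw [Measure.neg, gaussianReal_map_neg, neg_zero]⟩

lemma gmeas_eq_gaussianReal {q : ℝ} (hq : 0 < q) :
    gmeas q = gaussianReal 0 (q ^ 2 / 2).toNNReal := by
  have hv : ((q ^ 2 / 2).toNNReal : ℝ) = q ^ 2 / 2 := Real.coe_toNNReal _ (by positivity)
  rw [gaussianReal_of_var_ne_zero _ (by rw [← NNReal.coe_ne_zero, hv]; positivity), gmeas]
  congr 1
  funext z
  rw [gaussianPDF, gaussianPDFReal, hv, show 2 * Real.pi * (q ^ 2 / 2) = Real.pi * q ^ 2 by ring,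
    Real.sqrt_mul Real.pi_pos.le, Real.sqrt_sq hq.le]
  ring_nf

lemma isProbabilityMeasure_gmeas {q : ℝ} (hq : 0 < q) : IsProbabilityMeasure (gmeas q) := by
  rw [gmeas_eq_gaussianReal hq]; infer_instance

lemma isNegInvariant_gmeas {q : ℝ} (hq : 0 < q) : (gmeas q).IsNegInvariant := by
  rw [gmeas_eq_gaussianReal hq]; infer_instance

lemma Function.Odd.integral_eq_zero {G : Type*} [MeasurableSpace G] [AddGroup G]
    [MeasurableNeg G] {μ : Measure G} [μ.IsNegInvariant] {g : G → ℝ} (hg : g.Odd) :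
    ∫ x, g x ∂μ = 0 := by
  have h := integral_neg_eq_self g μ
  simp only [hg.eq, integral_neg] at h
  linarith

lemma integrable_comp_of_forall_abs_le {Ω ι : Type*} [MeasurableSpace Ω] [Fintype ι]
    {μ : Measure Ω} [IsFiniteMeasure μ] {w : Ω → ι → ℝ} (hw : ∀ l, Measurable fun ω => w ω l)
    (hbd : ∀ l, ∃ C, ∀ ω, |w ω l| ≤ C) {Φ : (ι → ℝ) → ℝ} (hΦ : Continuous Φ) :
    Integrable (fun ω => Φ (w ω)) μ := by
  choose C hC using hbd
  obtain ⟨M, hM⟩ := (isCompact_univ_pi fun l => isCompact_Icc (a := -C l) (b := C l))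
    |>.exists_bound_of_continuousOn hΦ.continuousOn
  refine .of_bound (hΦ.measurable.comp (measurable_pi_lambda _ hw)).aestronglyMeasurable M
    (ae_of_all _ fun ω => hM _ fun l _ => abs_le.mp (hC l ω))

lemma quadratic_add_of_isSymm {ι R : Type*} [Fintype ι] [Field R] [NeZero (2 : R)]
    {A : Matrix ι ι R} (hA : A.IsSymm) (b u p : ι → R) (c : R) :
    1 / 2 * ((u + p) ⬝ᵥ A *ᵥ (u + p)) + b ⬝ᵥ (u + p) + c =
      (1 / 2 * (u ⬝ᵥ A *ᵥ u) + b ⬝ᵥ u + c) + (A *ᵥ u + b) ⬝ᵥ p + 1 / 2 * (p ⬝ᵥ A *ᵥ p) := by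
  have hcross : u ⬝ᵥ A *ᵥ p = A *ᵥ u ⬝ᵥ p := by
    rw [dotProduct_mulVec, ← mulVec_transpose, hA.eq]
  simp only [mulVec_add, dotProduct_add, add_dotProduct, hcross, dotProduct_comm p (A *ᵥ u)]
  linear_combination (A *ᵥ u ⬝ᵥ p) * add_halves (1 : R)

section OddAveraging

variable {Ω ι : Type*} [MeasurableSpace Ω] [AddGroup Ω] [MeasurableNeg Ω] [Fintype ι]
  {μ : Measure Ω} [IsFiniteMeasure μ] [μ.IsNegInvariant] {w : Ω → ι → ℝ}

theorem integral_mul_quadratic_of_odd (hw : ∀ l, Measurable fun ω => w ω l)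
    (hbd : ∀ l, ∃ C, ∀ ω, |w ω l| ≤ C) (hodd : w.Odd) {A : Matrix ι ι ℝ}
    (hA : A.IsSymm) (b u : ι → ℝ) (c : ℝ) (M : Matrix ι ι ℝ) (i : ι) :
    ∫ ω, w ω i * (1 / 2 * ((u + M *ᵥ w ω) ⬝ᵥ A *ᵥ (u + M *ᵥ w ω)) + b ⬝ᵥ (u + M *ᵥ w ω) + c) ∂μ =
      (A *ᵥ u + b) ⬝ᵥ M *ᵥ fun l => ∫ ω, w ω i * w ω l ∂μ := by
  set K := 1 / 2 * (u ⬝ᵥ A *ᵥ u) + b ⬝ᵥ u + c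
  set even : (ι → ℝ) → ℝ := fun v => K + 1 / 2 * (M *ᵥ v ⬝ᵥ A *ᵥ M *ᵥ v)
  have hsplit : ∀ ω, w ω i * (1 / 2 * ((u + M *ᵥ w ω) ⬝ᵥ A *ᵥ (u + M *ᵥ w ω)) +
      b ⬝ᵥ (u + M *ᵥ w ω) + c) =
      w ω i * even (w ω) + ∑ l, ((A *ᵥ u + b) ᵥ* M) l * (w ω i * w ω l) := by
    intro ω
    have hlin : w ω i * ((A *ᵥ u + b) ᵥ* M ⬝ᵥ w ω) =
        ∑ l, ((A *ᵥ u + b) ᵥ* M) l * (w ω i * w ω l) := by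
      rw [dotProduct, Finset.mul_sum]
      exact Finset.sum_congr rfl fun l _ => by ring
    rw [quadratic_add_of_isSymm hA, dotProduct_mulVec _ M, ← hlin]
    ring
  have hint : ∀ Φ : (ι → ℝ) → ℝ, Continuous Φ → Integrable (fun ω => Φ (w ω)) μ :=
    fun _ => integrable_comp_of_forall_abs_le hw hbd
  have hprod : ∀ l, Integrable (fun ω => w ω i * w ω l) μ :=
    fun l => hint (fun v => v i * v l) (by fun_prop)
  simp_rw [hsplit]
  rw [integral_add (hint (fun v => v i * even v) (by fun_prop))
      (integrable_finsetSum _ fun l _ => (hprod l).const_mul _),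
    Function.Odd.integral_eq_zero fun ω => by simp [even, hodd.eq, mulVec_neg], zero_add,
    integral_finsetSum _ fun l _ => (hprod l).const_mul _, dotProduct_mulVec, dotProduct]
  simp_rw [integral_const_mul]

end OddAveraging

lemma integral_pi_mul_eq_single {ι X : Type*} [Fintype ι] [DecidableEq ι] [MeasurableSpace X]
    {ν : ι → Measure X} [∀ l, IsProbabilityMeasure (ν l)] {f : ι → X → ℝ}
    (hf : ∀ l, Measurable (f l)) (hmean : ∀ l, ∫ x, f l x ∂ν l = 0) (i : ι) :
    (fun l => ∫ z, f i (z i) * f l (z l) ∂Measure.pi ν) = Pi.single i (∫ x, f i x ^ 2 ∂ν i) := by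
  funext l
  rcases eq_or_ne l i with rfl | hli
  · simp_rw [Pi.single_eq_same, ← sq]
    exact integral_comp_eval (μ := ν) (f := fun x => f l x ^ 2)
      ((hf l).pow_const 2).aestronglyMeasurable
  · have hcoord : ∀ j, Measurable fun z : ι → X => f j (z j) :=
      fun j => (hf j).comp (measurable_pi_apply j)
    have hindep : IndepFun (fun z : ι → X => f i (z i)) (fun z => f l (z l)) (Measure.pi ν) :=
      (iIndepFun_pi fun l => (hf l).aemeasurable).indepFun hli.symm
    rw [Pi.single_eq_of_ne hli, hindep.integral_fun_mul_eq_mul_integral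
        (hcoord i).aestronglyMeasurable (hcoord l).aestronglyMeasurable,
      integral_comp_eval (hf i).aestronglyMeasurable, hmean, zero_mul]

def deceptionMatrix {ι : Type*} [DecidableEq ι] (𝒟 : Finset ι) (Dset : ι → Finset ι)
    (δ : ι → ℝ) : Matrix ι ι ℝ :=
  1 + Matrix.of fun k j => if k ∈ 𝒟 ∧ j ∈ Dset k then δ k else 0

section DeceptionMatrix

variable {ι : Type*} [Fintype ι] [DecidableEq ι] (𝒟 : Finset ι) (Dset : ι → Finset ι) (δ : ι → ℝ)

lemma deceptionMatrix_mul_diagonal_mulVec (a v : ι → ℝ) (k : ι) :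
    ((deceptionMatrix 𝒟 Dset δ * diagonal a) *ᵥ v) k =
      if k ∈ 𝒟 then a k * v k + δ k * ∑ j ∈ Dset k, a j * v j else a k * v k := by
  have hdiag : diagonal a *ᵥ v = a * v := funext (mulVec_diagonal a v)
  rw [← mulVec_mulVec, hdiag, deceptionMatrix, add_mulVec, one_mulVec]
  split_ifs with hk <;> simp [mulVec, dotProduct, hk, Finset.mul_sum]

lemma vecMul_deceptionMatrix_apply (v : ι → ℝ) (i : ι) :
    (v ᵥ* deceptionMatrix 𝒟 Dset δ) i = v i + ∑ k ∈ 𝒟.filter (fun k => i ∈ Dset k), δ k * v k := by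
  rw [deceptionMatrix, vecMul_add, vecMul_one, Pi.add_apply, Finset.sum_filter]
  simp [vecMul, dotProduct, ite_and, mul_comm]

end DeceptionMatrix

theorem stmt8_general (N : ℕ) (q a : Fin N → ℝ) (hq : ∀ i, 0 < q i)
    (f : Fin N → ℝ → ℝ)
    (hmeas : ∀ i, Measurable (f i))
    (hbd : ∀ i, ∃ C : ℝ, ∀ s, |f i s| ≤ C)
    (hodd : ∀ i s, f i (-s) = -f i s)
    (A : Fin N → Matrix (Fin N) (Fin N) ℝ) (hsymm : ∀ i, (A i).IsSymm)
    (b : Fin N → Fin N → ℝ) (c : Fin N → ℝ)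
    (J : Fin N → (Fin N → ℝ) → ℝ)
    (hJ : ∀ i x, J i x = (1 / 2) * (x ⬝ᵥ (A i).mulVec x) + (b i) ⬝ᵥ x + c i)
    (𝒜 : Matrix (Fin N) (Fin N) ℝ) (h𝒜 : ∀ i j, 𝒜 i j = A i i j)
    (ℬ : Fin N → ℝ) (hℬ : ∀ i, ℬ i = b i i)
    (𝒟 : Finset (Fin N)) (Dset : Fin N → Finset (Fin N))
    (𝒦 : Fin N → Finset (Fin N)) (h𝒦 : ∀ i, 𝒦 i = 𝒟.filter fun k => i ∈ Dset k)
    (δ : Fin N → ℝ)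
    (Abar : Matrix (Fin N) (Fin N) ℝ)
    (hAbar : ∀ i j, Abar i j = 𝒜 i j + ∑ k ∈ 𝒦 i, δ k * A i k j)
    (Bbar : Fin N → ℝ)
    (hBbar : ∀ i, Bbar i = ℬ i + ∑ k ∈ 𝒦 i, δ k * b i k)
    (γ : Fin N → ℝ) (hγ : ∀ l, γ l = ∫ s : ℝ, (f l s) ^ 2 ∂(gmeas (q l)))
    (etabar : (Fin N → ℝ) → Fin N → ℝ)
    (heta : ∀ z k, etabar z k =
      if k ∈ 𝒟 then a k * f k (z k) + δ k * ∑ j ∈ Dset k, a j * f j (z j)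
      else a k * f k (z k)) :
    ∀ (u : Fin N → ℝ) (i : Fin N),
      ∫ z : Fin N → ℝ, f i (z i) * J i (u + etabar z)
          ∂(Measure.pi fun l => gmeas (q l)) =
        a i * γ i * (Abar.mulVec u + Bbar) i := by
  intro u i
  have := fun l => isProbabilityMeasure_gmeas (hq l)
  have := fun l => isNegInvariant_gmeas (hq l)
  set D := deceptionMatrix 𝒟 Dset δ
  have hη : ∀ z, etabar z = (D * diagonal a) *ᵥ fun l => f l (z l) := fun z =>
    funext fun k => by rw [heta, deceptionMatrix_mul_diagonal_mulVec]
  have hmean : ∀ l, ∫ s, f l s ∂gmeas (q l) = 0 := fun l => Function.Odd.integral_eq_zero (hodd l)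
  have hrow : (Abar *ᵥ u + Bbar) i = ((A i *ᵥ u + b i) ᵥ* D) i := by
    rw [vecMul_deceptionMatrix_apply, ← h𝒦]
    simp only [Pi.add_apply, mulVec, dotProduct, hAbar, h𝒜, hBbar, hℬ, add_mul,
      Finset.sum_add_distrib, Finset.sum_mul, mul_add, Finset.mul_sum, mul_assoc]
    rw [Finset.sum_comm]
    ring
  simp_rw [hJ, hη]
  rw [integral_mul_quadratic_of_odd (w := fun (z : Fin N → ℝ) l => f l (z l))
      (fun l => by fun_prop) (fun l => (hbd l).imp fun C hC z => hC (z l))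
      (fun z => funext fun l => hodd l (z l)) (hsymm i),
    integral_pi_mul_eq_single hmeas hmean, ← hγ, dotProduct_mulVec, ← vecMul_vecMul,
    dotProduct_single, vecMul_diagonal, hrow]
  ring

/-- In the deceptive quadratic game with costs
`J i x = ½ xᵀ (A i) x + (b i)ᵀ x + c i` (each `A i` symmetric), pseudogradient data
`𝒜 i j = A i i j`, `ℬ i = b i i`, perturbed data
`Ā(δ) i j = 𝒜 i j + ∑ k ∈ 𝒦 i, δ k * A i k j`,
`B̄(δ) i = ℬ i + ∑ k ∈ 𝒦 i, δ k * b i k` (where `𝒦 i = {k ∈ 𝒟 : i ∈ 𝒟_k}`),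
Gaussian product measure `μ`, bounded measurable odd functions `f`, amplitudes `a`,
`γ i = ∫ f_i(s)² dμ_i(s)`, and exploration perturbation `η̄`: for every `u` and `i`,
`∫ f_i(z_i) · J_i(u + η̄(z)) dμ(z) = a_i γ_i · [Ā(δ)u + B̄(δ)]_i`. -/
theorem stmt8 (N : ℕ) (q a : Fin N → ℝ) (hq : ∀ i, 0 < q i) (ha : ∀ i, 0 < a i)
    (f : Fin N → ℝ → ℝ)
    (hmeas : ∀ i, Measurable (f i))
    (hbd : ∀ i, ∃ C : ℝ, ∀ s, |f i s| ≤ C)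
    (hodd : ∀ i s, f i (-s) = -f i s)
    (A : Fin N → Matrix (Fin N) (Fin N) ℝ) (hsymm : ∀ i, (A i).IsSymm)
    (b : Fin N → Fin N → ℝ) (c : Fin N → ℝ)
    (J : Fin N → (Fin N → ℝ) → ℝ)
    (hJ : ∀ i x, J i x = (1 / 2) * (x ⬝ᵥ (A i).mulVec x) + (b i) ⬝ᵥ x + c i)
    (𝒜 : Matrix (Fin N) (Fin N) ℝ) (h𝒜 : ∀ i j, 𝒜 i j = A i i j)
    (ℬ : Fin N → ℝ) (hℬ : ∀ i, ℬ i = b i i)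
    (𝒟 : Finset (Fin N)) (Dset : Fin N → Finset (Fin N))
    (hD : ∀ k ∈ 𝒟, k ∉ Dset k)
    (𝒦 : Fin N → Finset (Fin N)) (h𝒦 : ∀ i, 𝒦 i = 𝒟.filter fun k => i ∈ Dset k)
    (δ : Fin N → ℝ)
    (Abar : Matrix (Fin N) (Fin N) ℝ)
    (hAbar : ∀ i j, Abar i j = 𝒜 i j + ∑ k ∈ 𝒦 i, δ k * A i k j)
    (Bbar : Fin N → ℝ)
    (hBbar : ∀ i, Bbar i = ℬ i + ∑ k ∈ 𝒦 i, δ k * b i k)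
    (γ : Fin N → ℝ) (hγ : ∀ l, γ l = ∫ s : ℝ, (f l s) ^ 2 ∂(gmeas (q l)))
    (etabar : (Fin N → ℝ) → Fin N → ℝ)
    (heta : ∀ z k, etabar z k =
      if k ∈ 𝒟 then a k * f k (z k) + δ k * ∑ j ∈ Dset k, a j * f j (z j)
      else a k * f k (z k)) :
    ∀ (u : Fin N → ℝ) (i : Fin N),
      ∫ z : Fin N → ℝ, f i (z i) * J i (u + etabar z)
          ∂(Measure.pi fun l => gmeas (q l)) =
        a i * γ i * (Abar.mulVec u + Bbar) i :=
  stmt8_general N q a hq f hmeas hbd hodd A hsymm b c J hJ 𝒜 h𝒜 ℬ hℬ 𝒟 Dset 𝒦 h𝒦 δ Abar hAbar Bbar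
    hBbar γ hγ etabar heta
end

section
/- With the setup of the deceptive quadratic game (costs J_i(x) = ½ xᵀ A_i x + b_iᵀ x + c_i with A_i symmetric; Gaussian measures μ_i on ℝ with density (1/(√π q_i)) e^{-z²/q_i²} and product μ = μ_1 × ⋯ × μ_N; bounded measurable odd functions f_1,…,f_N; amplitudes a_1,…,a_N > 0; deceptive sets 𝒟, 𝒟_k; gains δ_k ∈ ℝ; η̄ : ℝ^N → ℝ^N defined by [η̄(z)]_k = a_k f_k(z_k) + δ_k Σ_{j∈𝒟_k} a_j f_j(z_j) for k ∈ 𝒟 and [η̄(z)]_k = a_k f_k(z_k) otherwise): for every u ∈ ℝ^N and every i, ∫_{ℝ^N} J_i(u + η̄(z)) dμ(z) = J_i(u) + ½ ∫_{ℝ^N} η̄(z)ᵀ A_i η̄(z) dμ(z). -/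
open MeasureTheory Matrix Finset
open scoped NNReal ENNReal

namespace Stmt9Aux

noncomputable def rho (q : ℝ) : ℝ → ℝ :=
  fun z => (Real.sqrt Real.pi * q)⁻¹ * Real.exp (-z ^ 2 / q ^ 2)

lemma rho_nonneg {q : ℝ} (hq : 0 < q) (z : ℝ) : 0 ≤ rho q z := by
  have : (0:ℝ) ≤ (Real.sqrt Real.pi * q)⁻¹ := by
    positivity
  exact mul_nonneg this (Real.exp_nonneg _)

lemma rho_meas (q : ℝ) : Measurable (rho q) := by
  unfold rho
  fun_prop

lemma rho_eq (q : ℝ) (hq : 0 < q) (z : ℝ) :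
    rho q z = (Real.sqrt Real.pi * q)⁻¹ * Real.exp (-(1 / q ^ 2) * z ^ 2) := by
  unfold rho
  ring_nf

lemma rho_integrable {q : ℝ} (hq : 0 < q) : Integrable (rho q) := by
  have h : Integrable (fun z : ℝ => Real.exp (-(1 / q ^ 2) * z ^ 2)) :=
    integrable_exp_neg_mul_sq (by positivity)
  have := (h.const_mul ((Real.sqrt Real.pi * q)⁻¹))
  refine this.congr (Filter.Eventually.of_forall fun z => ?_)
  rw [rho_eq q hq]

lemma rho_integral {q : ℝ} (hq : 0 < q) : ∫ z, rho q z = 1 := by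
  have h1 : ∫ z, rho q z = (Real.sqrt Real.pi * q)⁻¹ *
      ∫ z : ℝ, Real.exp (-(1 / q ^ 2) * z ^ 2) := by
    rw [← integral_const_mul]
    exact integral_congr_ae (Filter.Eventually.of_forall fun z => rho_eq q hq z)
  rw [h1, integral_gaussian]
  have hpi : 0 < Real.pi := Real.pi_pos
  have : Real.pi / (1 / q ^ 2) = Real.pi * q ^ 2 := by
    field_simp
  rw [this]
  have hsq : Real.sqrt (Real.pi * q ^ 2) = Real.sqrt Real.pi * q := by
    rw [Real.sqrt_mul hpi.le, Real.sqrt_sq hq.le]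
  rw [hsq]
  have : Real.sqrt Real.pi * q ≠ 0 := by positivity
  field_simp

lemma gmeas_eq (q : ℝ) :
    gmeas q = volume.withDensity fun z => ((rho q z).toNNReal : ℝ≥0∞) := by
  rfl

instance : ∀ (q : ℝ), SFinite (gmeas q) := fun q => by
  unfold gmeas; infer_instance

lemma gmeas_prob {q : ℝ} (hq : 0 < q) : IsProbabilityMeasure (gmeas q) := by
  constructor
  have : gmeas q Set.univ = ∫⁻ z, ENNReal.ofReal (rho q z) := by
    unfold gmeas
    rw [withDensity_apply _ MeasurableSet.univ]
    simp [rho]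
  rw [this, ← ofReal_integral_eq_lintegral_ofReal (rho_integrable hq)
    (Filter.Eventually.of_forall (rho_nonneg hq)), rho_integral hq]
  simp

/-- Integral against the Gaussian measure as a Lebesgue integral. -/
lemma integral_gmeas (q : ℝ) (hq : 0 < q) (g : ℝ → ℝ) :
    ∫ z, g z ∂(gmeas q) = ∫ z, rho q z * g z := by
  rw [gmeas_eq]
  rw [integral_withDensity_eq_integral_smul ((rho_meas q).real_toNNReal) g]
  refine integral_congr_ae (Filter.Eventually.of_forall fun z => ?_)
  simp [NNReal.smul_def, Real.coe_toNNReal _ (rho_nonneg hq z)]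

/-- Odd functions integrate to zero against the Gaussian measure. -/
lemma integral_gmeas_odd (q : ℝ) (hq : 0 < q) (g : ℝ → ℝ)
    (hodd : ∀ s, g (-s) = -g s) :
    ∫ z, g z ∂(gmeas q) = 0 := by
  rw [integral_gmeas q hq]
  have key : ∫ z, rho q z * g z = - ∫ z, rho q z * g z := by
    conv_lhs => rw [← integral_neg_eq_self (fun z => rho q z * g z) volume]
    have : ∀ z : ℝ, rho q (-z) * g (-z) = -(rho q z * g z) := by
      intro z
      rw [hodd]
      have : rho q (-z) = rho q z := by unfold rho; ring_nf
      rw [this]; ring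
    calc ∫ z : ℝ, rho q (-z) * g (-z) = ∫ z : ℝ, -(rho q z * g z) :=
          integral_congr_ae (Filter.Eventually.of_forall this)
      _ = - ∫ z : ℝ, rho q z * g z := integral_neg _
  linarith [key]

/-- The pushforward of a product of probability measures under evaluation. -/
lemma map_eval_pi {N : ℕ} (μ : Fin N → Measure ℝ) [∀ l, IsProbabilityMeasure (μ l)]
    (j : Fin N) : (Measure.pi μ).map (fun z => z j) = μ j := by
  ext s hs
  rw [Measure.map_apply (measurable_pi_apply j) hs]
  have hpre : (fun z : Fin N → ℝ => z j) ⁻¹' s =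
      Set.pi Set.univ (Function.update (fun _ : Fin N => (Set.univ : Set ℝ)) j s) := by
    ext z
    simp only [Set.mem_preimage, Set.mem_pi, Set.mem_univ, true_implies]
    constructor
    · intro h l
      by_cases hl : l = j
      · subst hl; simpa using h
      · simp [Function.update_of_ne hl]
    · intro h
      have := h j
      simpa using this
  rw [hpre, Measure.pi_pi]
  rw [Finset.prod_eq_single j]
  · simp
  · intro l _ hl
    simp [Function.update_of_ne hl]
  · simp

/-- Bounded measurable real functions are integrable w.r.t. finite measures. -/
lemma integrable_of_bdd {α : Type*} [MeasurableSpace α] (μ : Measure α)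
    [IsFiniteMeasure μ] {g : α → ℝ} (hm : Measurable g) {C : ℝ}
    (hb : ∀ x, |g x| ≤ C) : Integrable g μ :=
  ⟨hm.aestronglyMeasurable,
    HasFiniteIntegral.of_bounded (C := C) (Filter.Eventually.of_forall fun x => by
      simpa [Real.norm_eq_abs] using hb x)⟩

end Stmt9Aux

open Stmt9Aux

/-- In the deceptive quadratic game with costs
`J i x = ½ xᵀ (A i) x + (b i)ᵀ x + c i` (each `A i` symmetric), Gaussian product
measure `μ`, bounded measurable odd functions `f`, amplitudes `a > 0`, deceptive sets
`𝒟`, `𝒟_k`, gains `δ`, and perturbation `η̄`: for every `u` and `i`,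
`∫ J_i(u + η̄(z)) dμ(z) = J_i(u) + ½ ∫ η̄(z)ᵀ A_i η̄(z) dμ(z)`. -/
theorem stmt9 (N : ℕ) (q a : Fin N → ℝ) (hq : ∀ i, 0 < q i) (ha : ∀ i, 0 < a i)
    (f : Fin N → ℝ → ℝ)
    (hmeas : ∀ i, Measurable (f i))
    (hbd : ∀ i, ∃ C : ℝ, ∀ s, |f i s| ≤ C)
    (hodd : ∀ i s, f i (-s) = -f i s)
    (A : Fin N → Matrix (Fin N) (Fin N) ℝ) (hsymm : ∀ i, (A i).IsSymm)
    (b : Fin N → Fin N → ℝ) (c : Fin N → ℝ)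
    (J : Fin N → (Fin N → ℝ) → ℝ)
    (hJ : ∀ i x, J i x = (1 / 2) * (x ⬝ᵥ (A i).mulVec x) + (b i) ⬝ᵥ x + c i)
    (𝒟 : Finset (Fin N)) (Dset : Fin N → Finset (Fin N))
    (hD : ∀ k ∈ 𝒟, k ∉ Dset k)
    (δ : Fin N → ℝ)
    (etabar : (Fin N → ℝ) → Fin N → ℝ)
    (heta : ∀ z k, etabar z k =
      if k ∈ 𝒟 then a k * f k (z k) + δ k * ∑ j ∈ Dset k, a j * f j (z j)
      else a k * f k (z k)) :
    ∀ (u : Fin N → ℝ) (i : Fin N),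
      ∫ z : Fin N → ℝ, J i (u + etabar z) ∂(Measure.pi fun l => gmeas (q l)) =
        J i u + (1 / 2) *
          ∫ z : Fin N → ℝ, etabar z ⬝ᵥ (A i).mulVec (etabar z)
            ∂(Measure.pi fun l => gmeas (q l)) := by
  intro u i
  set μ : Measure (Fin N → ℝ) := Measure.pi fun l => gmeas (q l) with hμ
  haveI : ∀ l, IsProbabilityMeasure (gmeas (q l)) := fun l => gmeas_prob (hq l)
  haveI : IsProbabilityMeasure μ := by rw [hμ]; infer_instance
  -- bounds for the fⱼ
  choose C hC using hbd
  have hC0 : ∀ j, 0 ≤ C j := fun j => le_trans (abs_nonneg _) (hC j 0)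
  -- each z ↦ f j (z j) is measurable, bounded, integrable with zero integral
  have hfj_meas : ∀ j : Fin N, Measurable fun z : Fin N → ℝ => f j (z j) :=
    fun j => (hmeas j).comp (measurable_pi_apply j)
  have hfj_int : ∀ j : Fin N, Integrable (fun z : Fin N → ℝ => f j (z j)) μ :=
    fun j => integrable_of_bdd μ (hfj_meas j) (fun z => hC j (z j))
  have hfj_zero : ∀ j : Fin N, ∫ z : Fin N → ℝ, f j (z j) ∂μ = 0 := by
    intro j
    have hmap := map_eval_pi (fun l => gmeas (q l)) j
    have : ∫ z : Fin N → ℝ, f j (z j) ∂μ = ∫ s, f j s ∂(gmeas (q j)) := by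
      rw [← hmap, integral_map (measurable_pi_apply j).aemeasurable
        (hmeas j).aestronglyMeasurable]
    rw [this]
    exact integral_gmeas_odd (q j) (hq j) (f j) (hodd j)
  -- η is measurable, integrable, with zero integral, componentwise
  have heta_meas : ∀ k, Measurable fun z : Fin N → ℝ => etabar z k := by
    intro k
    have : (fun z : Fin N → ℝ => etabar z k) = fun z =>
        if k ∈ 𝒟 then a k * f k (z k) + δ k * ∑ j ∈ Dset k, a j * f j (z j)
        else a k * f k (z k) := funext fun z => heta z k
    rw [this]
    by_cases hk : k ∈ 𝒟
    · simp only [hk, if_true]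
      exact (((hfj_meas k).const_mul _).add
        ((Finset.measurable_sum _ fun j _ => (hfj_meas j).const_mul _).const_mul _))
    · simp only [hk, if_false]
      exact (hfj_meas k).const_mul _
  -- componentwise bound
  set B : Fin N → ℝ := fun k => |a k| * C k + |δ k| * ∑ j ∈ Dset k, |a j| * C j with hB
  have hB0 : ∀ k, 0 ≤ B k := by
    intro k
    have h1 : (0:ℝ) ≤ |a k| * C k := mul_nonneg (abs_nonneg _) (hC0 k)
    have h2 : (0:ℝ) ≤ ∑ j ∈ Dset k, |a j| * C j :=
      Finset.sum_nonneg fun j _ => mul_nonneg (abs_nonneg _) (hC0 j)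
    have h3 : (0:ℝ) ≤ |δ k| * ∑ j ∈ Dset k, |a j| * C j :=
      mul_nonneg (abs_nonneg _) h2
    simp only [hB]
    linarith
  have heta_bd : ∀ z k, |etabar z k| ≤ B k := by
    intro z k
    rw [heta z k]
    have hterm : ∀ j, |a j * f j (z j)| ≤ |a j| * C j := by
      intro j
      rw [abs_mul]
      exact mul_le_mul_of_nonneg_left (hC j (z j)) (abs_nonneg _)
    by_cases hk : k ∈ 𝒟
    · simp only [hk, if_true]
      have hsum : |δ k * ∑ j ∈ Dset k, a j * f j (z j)| ≤
          |δ k| * ∑ j ∈ Dset k, |a j| * C j := by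
        rw [abs_mul]
        refine mul_le_mul_of_nonneg_left ?_ (abs_nonneg _)
        calc |∑ j ∈ Dset k, a j * f j (z j)| ≤ ∑ j ∈ Dset k, |a j * f j (z j)| :=
              Finset.abs_sum_le_sum_abs _ _
          _ ≤ ∑ j ∈ Dset k, |a j| * C j := Finset.sum_le_sum fun j _ => hterm j
      calc |a k * f k (z k) + δ k * ∑ j ∈ Dset k, a j * f j (z j)|
          ≤ |a k * f k (z k)| + |δ k * ∑ j ∈ Dset k, a j * f j (z j)| := abs_add_le _ _
        _ ≤ B k := add_le_add (hterm k) hsum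
    · simp only [hk, if_false]
      refine le_trans (hterm k) ?_
      have h2 : (0:ℝ) ≤ |δ k| * ∑ j ∈ Dset k, |a j| * C j :=
        mul_nonneg (abs_nonneg _)
          (Finset.sum_nonneg fun j _ => mul_nonneg (abs_nonneg _) (hC0 j))
      rw [hB]; dsimp only; linarith
  have heta_int : ∀ k, Integrable (fun z : Fin N → ℝ => etabar z k) μ :=
    fun k => integrable_of_bdd μ (heta_meas k) (fun z => heta_bd z k)
  have heta_zero : ∀ k, ∫ z : Fin N → ℝ, etabar z k ∂μ = 0 := by
    intro k
    have hrw : ∫ z : Fin N → ℝ, etabar z k ∂μ = ∫ z : Fin N → ℝ,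
        (if k ∈ 𝒟 then a k * f k (z k) + δ k * ∑ j ∈ Dset k, a j * f j (z j)
         else a k * f k (z k)) ∂μ :=
      integral_congr_ae (Filter.Eventually.of_forall fun z => heta z k)
    rw [hrw]
    by_cases hk : k ∈ 𝒟
    · simp only [hk, if_true]
      rw [integral_add ((hfj_int k).const_mul _)
        (((integrable_finset_sum _ fun j _ => (hfj_int j).const_mul _)).const_mul _)]
      rw [integral_const_mul, hfj_zero k, integral_const_mul,
        integral_finset_sum _ (fun j _ => (hfj_int j).const_mul _)]
      have : ∀ j ∈ Dset k, ∫ z : Fin N → ℝ, a j * f j (z j) ∂μ = 0 := by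
        intro j _
        rw [integral_const_mul, hfj_zero j, mul_zero]
      rw [Finset.sum_congr rfl this]
      simp
    · simp only [hk, if_false]
      rw [integral_const_mul, hfj_zero k, mul_zero]
  -- pointwise decomposition of J
  set w : Fin N → ℝ := fun k => (A i).mulVec u k + b i k with hw
  have hdecomp : ∀ z : Fin N → ℝ, J i (u + etabar z) =
      J i u + w ⬝ᵥ etabar z + (1 / 2) * (etabar z ⬝ᵥ (A i).mulVec (etabar z)) := by
    intro z
    set η := etabar z
    have hAs : ∀ v x : Fin N → ℝ, v ⬝ᵥ (A i).mulVec x = ((A i).mulVec v) ⬝ᵥ x := by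
      intro v x
      rw [dotProduct_mulVec]
      congr 1
      conv_lhs => rw [← (hsymm i).eq]
      rw [vecMul_transpose]
    have hsy : η ⬝ᵥ (A i).mulVec u = (A i).mulVec u ⬝ᵥ η := by
      rw [hAs η u, dotProduct_comm, hAs u η]
    have hsy2 : u ⬝ᵥ (A i).mulVec η = (A i).mulVec u ⬝ᵥ η := hAs u η
    have hwd : w ⬝ᵥ η = (A i).mulVec u ⬝ᵥ η + b i ⬝ᵥ η := by
      rw [hw]
      simp [dotProduct, add_mul, Finset.sum_add_distrib]
    rw [hJ, hJ]
    rw [mulVec_add, dotProduct_add, add_dotProduct, add_dotProduct, dotProduct_add,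
      hwd, hsy, hsy2]
    ring
  -- integrability of the quadratic term
  have hQmeas : Measurable fun z : Fin N → ℝ => etabar z ⬝ᵥ (A i).mulVec (etabar z) := by
    unfold dotProduct mulVec dotProduct
    exact Finset.measurable_sum _ fun k _ =>
      (heta_meas k).mul (Finset.measurable_sum _ fun l _ => ((heta_meas l).const_mul _))
  have hQbd : ∀ z : Fin N → ℝ, |etabar z ⬝ᵥ (A i).mulVec (etabar z)| ≤
      ∑ k, B k * ∑ l, |A i k l| * B l := by
    intro z
    unfold dotProduct mulVec dotProduct
    calc |∑ k, etabar z k * ∑ l, A i k l * etabar z l|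
        ≤ ∑ k, |etabar z k * ∑ l, A i k l * etabar z l| := Finset.abs_sum_le_sum_abs _ _
      _ ≤ ∑ k, B k * ∑ l, |A i k l| * B l := by
          refine Finset.sum_le_sum fun k _ => ?_
          rw [abs_mul]
          refine mul_le_mul (heta_bd z k) ?_ (abs_nonneg _) (hB0 k)
          calc |∑ l, A i k l * etabar z l| ≤ ∑ l, |A i k l * etabar z l| :=
                Finset.abs_sum_le_sum_abs _ _
            _ ≤ ∑ l, |A i k l| * B l := by
                refine Finset.sum_le_sum fun l _ => ?_
                rw [abs_mul]
                exact mul_le_mul_of_nonneg_left (heta_bd z l) (abs_nonneg _)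
  have hQint : Integrable (fun z : Fin N → ℝ => etabar z ⬝ᵥ (A i).mulVec (etabar z)) μ :=
    integrable_of_bdd μ hQmeas hQbd
  -- integrability of the linear term
  have hLint : Integrable (fun z : Fin N → ℝ => w ⬝ᵥ etabar z) μ := by
    have : (fun z : Fin N → ℝ => w ⬝ᵥ etabar z) =
        fun z => ∑ k, w k * etabar z k := by
      funext z; rfl
    rw [this]
    exact integrable_finset_sum _ fun k _ => (heta_int k).const_mul _
  have hLzero : ∫ z : Fin N → ℝ, w ⬝ᵥ etabar z ∂μ = 0 := by
    have : (fun z : Fin N → ℝ => w ⬝ᵥ etabar z) =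
        fun z => ∑ k, w k * etabar z k := by
      funext z; rfl
    rw [this, integral_finset_sum _ fun k _ => (heta_int k).const_mul _]
    refine Finset.sum_eq_zero fun k _ => ?_
    rw [integral_const_mul, heta_zero k, mul_zero]
  -- put it all together
  have hrw : ∫ z : Fin N → ℝ, J i (u + etabar z) ∂μ =
      ∫ z : Fin N → ℝ, (J i u + w ⬝ᵥ etabar z +
        (1 / 2) * (etabar z ⬝ᵥ (A i).mulVec (etabar z))) ∂μ :=
    integral_congr_ae (Filter.Eventually.of_forall fun z => hdecomp z)
  rw [hrw]
  have h1 : Integrable (fun z : Fin N → ℝ => J i u + w ⬝ᵥ etabar z) μ :=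
    (integrable_const (J i u)).add hLint
  have h2 : Integrable (fun z : Fin N → ℝ =>
      (1 / 2 : ℝ) * (etabar z ⬝ᵥ (A i).mulVec (etabar z))) μ := hQint.const_mul _
  rw [integral_add h1 h2, integral_add (integrable_const (J i u)) hLint,
    integral_const, integral_const_mul, hLzero]
  simp
end
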